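/- Let f be a sigmoidal efficiency function and let γ* be the unique positive solution of f(γ) = γ f′(γ). Then the function γ ↦ f(γ)/γ is strictly increasing on (0,γ*) and strictly decreasing on (γ*,∞); in particular, γ* is the unique maximizer of f(γ)/γ over γ > 0. -/

import Mathlib

/-! Put `φ(x) = x f'(x) - f(x)`, so that `(f(x)/x)' = φ(x)/x²` and `φ'(x) = x f''(x)`.
On `(0, a]` the mean value theorem and the convexity of `f` give `f(x) = x f'(c) < x f'(x)`,
so `φ > 0` there; in particular `a < g`, where `g = γ*` is a zero of `φ`. On `[a, ∞)`
concavity makes `φ` strictly decreasing. Hence `φ > 0` on `(0, g)` and `φ < 0` on `(g, ∞)`. -/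

open Set

section
variable {f f' f'' : ℝ → ℝ}

theorem strictMonoOn_of_hasDerivAt_pos {s : Set ℝ} (hs : Convex ℝ s)
    (hf : ∀ x ∈ s, HasDerivAt f (f' x) x) (hpos : ∀ x ∈ interior s, 0 < f' x) :
    StrictMonoOn f s :=
  strictMonoOn_of_hasDerivWithinAt_pos hs
    (fun x hx => (hf x hx).continuousAt.continuousWithinAt)
    (fun x hx => (hf x (interior_subset hx)).hasDerivWithinAt) hpos

theorem strictAntiOn_of_hasDerivAt_neg {s : Set ℝ} (hs : Convex ℝ s)
    (hf : ∀ x ∈ s, HasDerivAt f (f' x) x) (hneg : ∀ x ∈ interior s, f' x < 0) :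
    StrictAntiOn f s :=
  strictAntiOn_of_hasDerivWithinAt_neg hs
    (fun x hx => (hf x hx).continuousAt.continuousWithinAt)
    (fun x hx => (hf x (interior_subset hx)).hasDerivWithinAt) hneg

theorem hasDerivAt_div_id {x : ℝ} (hf : HasDerivAt f (f' x) x) (hx : x ≠ 0) :
    HasDerivAt (fun y => f y / y) ((x * f' x - f x) / x ^ 2) x :=
  (hf.div (hasDerivAt_id' x) hx).congr_deriv (by ring)

theorem hasDerivAt_mul_deriv_sub {x : ℝ} (hf : HasDerivAt f (f' x) x)
    (hf' : HasDerivAt f' (f'' x) x) :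
    HasDerivAt (fun y => y * f' y - f y) (x * f'' x) x :=
  (((hasDerivAt_id' x).mul hf').sub hf).congr_deriv (by ring)

theorem strictMonoOn_div_id {s : Set ℝ} (hs : Convex ℝ s) (hs0 : s ⊆ Ioi 0)
    (hf : ∀ x ∈ s, HasDerivAt f (f' x) x) (hpos : ∀ x ∈ interior s, 0 < x * f' x - f x) :
    StrictMonoOn (fun x => f x / x) s :=
  strictMonoOn_of_hasDerivAt_pos hs (fun x hx => hasDerivAt_div_id (hf x hx) (hs0 hx).ne')
    fun x hx => div_pos (hpos x hx) (pow_pos (hs0 (interior_subset hx)) 2)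

theorem strictAntiOn_div_id {s : Set ℝ} (hs : Convex ℝ s) (hs0 : s ⊆ Ioi 0)
    (hf : ∀ x ∈ s, HasDerivAt f (f' x) x) (hneg : ∀ x ∈ interior s, x * f' x - f x < 0) :
    StrictAntiOn (fun x => f x / x) s :=
  strictAntiOn_of_hasDerivAt_neg hs (fun x hx => hasDerivAt_div_id (hf x hx) (hs0 hx).ne')
    fun x hx => div_neg_of_neg_of_pos (hneg x hx) (pow_pos (hs0 (interior_subset hx)) 2)

theorem lt_mul_deriv_of_strictMonoOn {x : ℝ} (hx : 0 < x) (hf : ContinuousOn f (Icc 0 x))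
    (hf0 : f 0 = 0) (hderiv : ∀ y ∈ Ioo 0 x, HasDerivAt f (f' y) y)
    (hmono : StrictMonoOn f' (Ioc 0 x)) :
    f x < x * f' x := by
  obtain ⟨c, ⟨hc0, hcx⟩, hc⟩ := exists_hasDerivAt_eq_slope f f' hx hf hderiv
  have hfx : f x = x * f' c := by
    rw [hc, hf0, sub_zero, sub_zero, mul_div_cancel₀ _ hx.ne']
  rw [hfx]
  exact mul_lt_mul_of_pos_left (hmono ⟨hc0, hcx.le⟩ ⟨hx, le_rfl⟩ hcx) hx

end

theorem pos_on_Ioo_and_neg_on_Ioi_of_strictAntiOn {φ : ℝ → ℝ} {a g : ℝ}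
    (hpos : ∀ x ∈ Ioc 0 a, 0 < φ x) (hanti : StrictAntiOn φ (Ici a)) (hg : 0 < g)
    (hφg : φ g = 0) :
    (∀ x ∈ Ioo 0 g, 0 < φ x) ∧ ∀ x ∈ Ioi g, φ x < 0 := by
  have hag : a < g := lt_of_not_ge fun hga => (hpos g ⟨hg, hga⟩).ne' hφg
  refine ⟨fun x ⟨hx0, hxg⟩ => ?_, fun x hgx => hφg ▸ hanti hag.le (hag.trans hgx).le hgx⟩
  rcases le_or_gt x a with hxa | hax
  · exact hpos x ⟨hx0, hxa⟩
  · exact hφg ▸ hanti hax.le hag.le hxg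

theorem sigmoidal_f_over_gamma_unimodal_general (f f' f'' : ℝ → ℝ)
    (hcontf : ContinuousOn f (Set.Ici 0))
    (hderiv : ∀ x : ℝ, 0 < x → HasDerivAt f (f' x) x)
    (hderiv2 : ∀ x : ℝ, 0 < x → HasDerivAt f' (f'' x) x)
    (hf0 : f 0 = 0)
    (a : ℝ) (ha : 0 < a)
    (hconvex : ∀ x : ℝ, 0 < x → x < a → 0 < f'' x)
    (hconcave : ∀ x : ℝ, a < x → f'' x < 0)
    (g : ℝ) (hg : 0 < g) (hgeq : f g = g * f' g) :
    StrictMonoOn (fun γ : ℝ => f γ / γ) (Set.Ioo 0 g) ∧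
    StrictAntiOn (fun γ : ℝ => f γ / γ) (Set.Ioi g) ∧
    (∀ γ : ℝ, 0 < γ → γ ≠ g → f γ / γ < f g / g) := by
  have hf'mono : StrictMonoOn f' (Ioc 0 a) :=
    strictMonoOn_of_hasDerivAt_pos (convex_Ioc 0 a) (fun x hx => hderiv2 x hx.1)
      fun x hx => by rw [interior_Ioc] at hx; exact hconvex x hx.1 hx.2
  have hφanti : StrictAntiOn (fun x => x * f' x - f x) (Ici a) :=
    strictAntiOn_of_hasDerivAt_neg (convex_Ici a)
      (fun x hx =>
        hasDerivAt_mul_deriv_sub (hderiv x (ha.trans_le hx)) (hderiv2 x (ha.trans_le hx)))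
      fun x hx => by
        rw [interior_Ici] at hx; exact mul_neg_of_pos_of_neg (ha.trans hx) (hconcave x hx)
  have hφpos : ∀ x ∈ Ioc 0 a, 0 < x * f' x - f x := fun x hx =>
    sub_pos.2 <| lt_mul_deriv_of_strictMonoOn hx.1 (hcontf.mono Icc_subset_Ici_self) hf0
      (fun y hy => hderiv y hy.1) (hf'mono.mono (Ioc_subset_Ioc_right hx.2))
  obtain ⟨hbelow, habove⟩ :=
    pos_on_Ioo_and_neg_on_Ioi_of_strictAntiOn hφpos hφanti hg (sub_eq_zero.2 hgeq.symm)
  have hmono := strictMonoOn_div_id (convex_Ioc 0 g) (fun x hx => hx.1)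
    (fun x hx => hderiv x hx.1) fun x hx => hbelow x (by rwa [interior_Ioc] at hx)
  have hanti := strictAntiOn_div_id (convex_Ici g) (fun x hx => hg.trans_le hx)
    (fun x hx => hderiv x (hg.trans_le hx)) fun x hx => habove x (by rwa [interior_Ici] at hx)
  refine ⟨hmono.mono Ioo_subset_Ioc_self, hanti.mono Ioi_subset_Ici_self, fun γ hγ hne => ?_⟩
  rcases hne.lt_or_gt with h | h
  · exact hmono ⟨hγ, h.le⟩ ⟨hg, le_rfl⟩ h
  · exact hanti self_mem_Ici h.le h

/-- For a sigmoidal efficiency function `f` with `γ*` the unique positive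
solution of `f γ = γ f' γ`, the map `γ ↦ f γ / γ` is strictly increasing on `(0,γ*)`,
strictly decreasing on `(γ*,∞)`, and `γ*` is its unique maximizer over `γ > 0`. -/
theorem sigmoidal_f_over_gamma_unimodal (f f' f'' : ℝ → ℝ)
    (hcontf : ContinuousOn f (Set.Ici 0))
    (hderiv : ∀ x : ℝ, 0 < x → HasDerivAt f (f' x) x)
    (hcontf' : ContinuousOn f' (Set.Ioi 0))
    (hderiv2 : ∀ x : ℝ, 0 < x → HasDerivAt f' (f'' x) x)
    (hf0 : f 0 = 0)
    (hf'pos : ∀ x : ℝ, 0 < x → 0 < f' x)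
    (hrange : ∀ x : ℝ, 0 ≤ x → 0 ≤ f x ∧ f x < 1)
    (hlim : Filter.Tendsto f Filter.atTop (nhds 1))
    (a : ℝ) (ha : 0 < a)
    (hconvex : ∀ x : ℝ, 0 < x → x < a → 0 < f'' x)
    (hconcave : ∀ x : ℝ, a < x → f'' x < 0)
    (g : ℝ) (hg : 0 < g) (hgeq : f g = g * f' g)
    (hguniq : ∀ g' : ℝ, 0 < g' → f g' = g' * f' g' → g' = g) :
    StrictMonoOn (fun γ : ℝ => f γ / γ) (Set.Ioo 0 g) ∧
    StrictAntiOn (fun γ : ℝ => f γ / γ) (Set.Ioi g) ∧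
    (∀ γ : ℝ, 0 < γ → γ ≠ g → f γ / γ < f g / g) :=
  sigmoidal_f_over_gamma_unimodal_general f f' f'' hcontf hderiv hderiv2 hf0 a ha hconvex hconcave g
    hg hgeq
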